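/- If f is bi-univalent on 𝔻 with 1+zf''(z)/f'(z) ≺ φ(z) and 1+wg''(w)/g'(w) ≺ φ(w) for g=f⁻¹, where φ(z)=1+B₁z+B₂z²+⋯ with B₁>0 and B₁²+2B₁−2B₂≠0, then |a₂| ≤ B₁√B₁/√(2|B₁²+2B₁−2B₂|) and |a₃| ≤ (1/2)(B₁+|B₂−B₁|). -/

import Mathlib

/-!
Write the two subordinations as `1 + z f''/f' = φ ∘ u` and `1 + w g''/g' = φ ∘ v` with Schwarz
functions `u, v`, with coefficients `c₁, c₂` and `d₁, d₂`. Since `g = f⁻¹` near `0`, its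
coefficients are `-a₂` and `2 a₂² - a₃`, so comparing coefficients of `z` and `z²` gives
`2 a₂ = B₁ c₁ = -B₁ d₁`, `4 a₂² (B₁² - 2 B₂) = B₁³ (c₂ + d₂)` and
`6 a₃ = 2 B₁ c₂ + B₁ d₂ + 3 B₂ c₁²`. Both bounds then follow from the sharp estimate
`|c₂| ≤ 1 - |c₁|²` for Schwarz functions, which is the Schwarz–Pick lemma at `0` for `u(z)/z`.
-/

open Metric Complex Filter Topology

/-- n-th Taylor coefficient of `f` at `0`. -/
noncomputable def tc (f : ℂ → ℂ) (n : ℕ) : ℂ := iteratedDeriv n f 0 / n.factorial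

open Set ComplexConjugate

lemma tc_one (f : ℂ → ℂ) : tc f 1 = deriv f 0 := by
  simp [tc]

lemma tc_two (f : ℂ → ℂ) : tc f 2 = deriv (deriv f) 0 / 2 := by
  simp [tc, iteratedDeriv_succ]

lemma tc_three (f : ℂ → ℂ) : tc f 3 = deriv (deriv (deriv f)) 0 / 6 := by
  simp [tc, iteratedDeriv_succ, Nat.factorial]

lemma norm_sub_lt_norm_one_sub_conj_mul {a z : ℂ} (ha : ‖a‖ < 1) (hz : ‖z‖ < 1) :
    ‖a - z‖ < ‖1 - conj a * z‖ := by
  have key : ‖1 - conj a * z‖ ^ 2 - ‖a - z‖ ^ 2 = (1 - ‖a‖ ^ 2) * (1 - ‖z‖ ^ 2) := by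
    simp only [Complex.sq_norm, Complex.normSq_apply, Complex.sub_re, Complex.sub_im,
      Complex.mul_re, Complex.mul_im, Complex.one_re, Complex.one_im, Complex.conj_re,
      Complex.conj_im]
    ring
  have hpos : 0 < (1 - ‖a‖ ^ 2) * (1 - ‖z‖ ^ 2) := by
    apply mul_pos <;> nlinarith [norm_nonneg a, norm_nonneg z]
  exact lt_of_pow_lt_pow_left₀ 2 (norm_nonneg _) (by linarith)

lemma norm_deriv_le_one_sub_sq_of_mapsTo_ball {w : ℂ → ℂ} (hw : DifferentiableOn ℂ w (ball 0 1))
    (hmaps : MapsTo w (ball 0 1) (ball 0 1)) : ‖deriv w 0‖ ≤ 1 - ‖w 0‖ ^ 2 := by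
  have h0 : (0 : ℂ) ∈ ball (0 : ℂ) 1 := mem_ball_self one_pos
  -- Compose with the disc automorphism exchanging `a = w 0` and `0`, then apply Schwarz.
  set a := w 0
  have ha : ‖a‖ < 1 := mem_ball_zero_iff.1 (hmaps h0)
  have hlt : ∀ z ∈ ball (0 : ℂ) 1, ‖a - w z‖ < ‖1 - conj a * w z‖ := fun z hz =>
    norm_sub_lt_norm_one_sub_conj_mul ha (mem_ball_zero_iff.1 (hmaps hz))
  have hden : ∀ z ∈ ball (0 : ℂ) 1, 1 - conj a * w z ≠ 0 := fun z hz =>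
    norm_pos_iff.1 ((norm_nonneg _).trans_lt (hlt z hz))
  set h : ℂ → ℂ := fun z => (a - w z) / (1 - conj a * w z)
  have hh : DifferentiableOn ℂ h (ball 0 1) :=
    ((differentiableOn_const a).sub hw).div
      ((differentiableOn_const 1).sub ((differentiableOn_const _).mul hw)) hden
  have hhmaps : MapsTo h (ball 0 1) (closedBall (h 0) 1) := by
    intro z hz
    rw [show h 0 = 0 by simp [h, a], mem_closedBall_zero_iff, norm_div]
    exact div_le_one_of_le₀ (hlt z hz).le (norm_nonneg _)
  have hwd : HasDerivAt w (deriv w 0) 0 :=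
    (hw.differentiableAt (ball_mem_nhds 0 one_pos)).hasDerivAt
  have hconj : 1 - conj a * a = ((1 - ‖a‖ ^ 2 : ℝ) : ℂ) := by
    rw [Complex.conj_mul']; push_cast; ring
  have hderiv : deriv h 0 = -deriv w 0 / ((1 - ‖a‖ ^ 2 : ℝ) : ℂ) := by
    have hd : HasDerivAt h _ 0 :=
      (hwd.const_sub a).div ((hwd.const_mul (conj a)).const_sub 1) (hden 0 h0)
    rw [hd.deriv, sub_self, zero_mul, sub_zero, ← hconj, sq, mul_div_mul_right _ _ (hden 0 h0)]
  have hpos : 0 < 1 - ‖a‖ ^ 2 := by nlinarith [norm_nonneg a]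
  have := Complex.norm_deriv_le_one_of_mapsTo_ball hh hhmaps one_pos
  rwa [hderiv, norm_div, norm_neg, Complex.norm_real, Real.norm_of_nonneg hpos.le,
    div_le_one hpos] at this

lemma norm_deriv_le_one_sub_sq_of_mapsTo_closedBall {w : ℂ → ℂ}
    (hw : DifferentiableOn ℂ w (ball 0 1)) (hmaps : MapsTo w (ball 0 1) (closedBall 0 1)) :
    ‖deriv w 0‖ ≤ 1 - ‖w 0‖ ^ 2 := by
  have h0 : (0 : ℂ) ∈ ball (0 : ℂ) 1 := mem_ball_self one_pos
  by_cases hmax : ∃ z₀ ∈ ball (0 : ℂ) 1, ‖w z₀‖ = 1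
  · obtain ⟨z₀, hz₀, hn⟩ := hmax
    have hconst := Complex.eqOn_of_isPreconnected_of_isMaxOn_norm
      (convex_ball (0 : ℂ) 1).isPreconnected isOpen_ball hw hz₀
      (fun z hz => by simpa [hn] using hmaps hz)
    have hd : deriv w 0 = 0 := by
      rw [(hconst.eventuallyEq_of_mem (ball_mem_nhds 0 one_pos)).deriv_eq]
      exact deriv_const _ _
    simp [hd, hconst h0, hn]
  · push Not at hmax
    refine norm_deriv_le_one_sub_sq_of_mapsTo_ball hw fun z hz => ?_
    exact mem_ball_zero_iff.2 ((mem_closedBall_zero_iff.1 (hmaps hz)).lt_of_ne (hmax z hz))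

lemma tc_two_id_mul {w : ℂ → ℂ} (hw : AnalyticAt ℂ w 0) : tc (fun z => z * w z) 2 = tc w 1 := by
  have hd : deriv (fun z => z * w z) =ᶠ[𝓝 0] fun z => w z + z * deriv w z := by
    filter_upwards [hw.eventually_analyticAt] with z hz
    exact ((hasDerivAt_id z).mul hz.differentiableAt.hasDerivAt).deriv.trans
      (by simp only [id]; ring)
  have hd2 : HasDerivAt (fun z => w z + z * deriv w z) (2 * deriv w 0) 0 :=
    (hw.differentiableAt.hasDerivAt.add
      ((hasDerivAt_id 0).mul hw.deriv.differentiableAt.hasDerivAt)).congr_deriv (by ring)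
  rw [tc_two, tc_one, hd.deriv_eq, hd2.deriv]
  ring

lemma norm_tc_two_le_of_mapsTo_ball {u : ℂ → ℂ} (hu : DifferentiableOn ℂ u (ball 0 1))
    (hmaps : MapsTo u (ball 0 1) (ball 0 1)) (hu0 : u 0 = 0) :
    ‖tc u 2‖ ≤ 1 - ‖tc u 1‖ ^ 2 := by
  have hball : ball (0 : ℂ) 1 ∈ 𝓝 0 := ball_mem_nhds 0 one_pos
  have hw : DifferentiableOn ℂ (dslope u 0) (ball 0 1) := (differentiableOn_dslope hball).2 hu
  have hwmaps : MapsTo (dslope u 0) (ball 0 1) (closedBall 0 1) := fun z hz => by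
    simpa using Complex.norm_dslope_le_div_of_mapsTo_ball hu
      (by rw [hu0]; exact hmaps.mono_right ball_subset_closedBall) hz
  have hu_eq : u = fun z => z * dslope u 0 z := funext fun z => by
    simpa [hu0] using (sub_smul_dslope u 0 z).symm
  have h1 : tc u 1 = dslope u 0 0 := by rw [tc_one, dslope_same]
  have h2 : tc u 2 = deriv (dslope u 0) 0 := by
    rw [← tc_one, ← tc_two_id_mul (hw.analyticAt hball), ← hu_eq]
  rw [h1, h2]
  exact norm_deriv_le_one_sub_sq_of_mapsTo_closedBall hw hwmaps

lemma Filter.EventuallyEq.eventuallyEq_of_hasDerivAt {𝕜 E : Type*} [NontriviallyNormedField 𝕜]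
    [NormedAddCommGroup E] [NormedSpace 𝕜 E] {F G F' G' : 𝕜 → E} {x : 𝕜} (h : F =ᶠ[𝓝 x] G)
    (hF : ∀ᶠ z in 𝓝 x, HasDerivAt F (F' z) z) (hG : ∀ᶠ z in 𝓝 x, HasDerivAt G (G' z) z) :
    F' =ᶠ[𝓝 x] G' := by
  filter_upwards [h.deriv, hF, hG] with z hz hFz hGz
  rw [← hFz.deriv, hz, hGz.deriv]

lemma tc_of_one_add_mul_iteratedDeriv_two_div_deriv_eq_comp {F φ U : ℂ → ℂ} (hF : AnalyticAt ℂ F 0)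
    (hφ : AnalyticAt ℂ φ 0) (hU : AnalyticAt ℂ U 0) (hU0 : U 0 = 0) (hφ0 : φ 0 = 1)
    (hF1 : deriv F 0 = 1)
    (heq : ∀ᶠ z in 𝓝 0, 1 + z * iteratedDeriv 2 F z / deriv F z = φ (U z)) :
    2 * tc F 2 = tc φ 1 * tc U 1 ∧
      6 * tc F 3 - 4 * tc F 2 ^ 2 = tc φ 1 * tc U 2 + tc φ 2 * tc U 1 ^ 2 := by
  have hFz := hF.eventually_analyticAt
  have hUz := hU.eventually_analyticAt
  have hφU : ∀ᶠ z in 𝓝 0, AnalyticAt ℂ φ (U z) :=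
    hU.continuousAt.eventually (by rw [hU0]; exact hφ.eventually_analyticAt)
  have hF' : ∀ᶠ z in 𝓝 0, deriv F z ≠ 0 :=
    hF.deriv.continuousAt.eventually_ne (by rw [hF1]; exact one_ne_zero)
  have E0 : (fun z => z * deriv (deriv F) z) =ᶠ[𝓝 0] fun z => (φ (U z) - 1) * deriv F z := by
    filter_upwards [heq, hF'] with z h hz
    rw [iteratedDeriv_succ, iteratedDeriv_one] at h
    field_simp at h
    linear_combination h
  have E1 : (fun z => deriv (deriv F) z + z * deriv (deriv (deriv F)) z) =ᶠ[𝓝 0]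
      fun z => deriv φ (U z) * deriv U z * deriv F z + (φ (U z) - 1) * deriv (deriv F) z := by
    refine E0.eventuallyEq_of_hasDerivAt ?_ ?_
    · filter_upwards [hFz] with z hz
      exact ((hasDerivAt_id z).mul hz.deriv.deriv.differentiableAt.hasDerivAt).congr_deriv
        (by simp only [id]; ring)
    · filter_upwards [hFz, hUz, hφU] with z hFz hUz hφz
      exact ((hφz.differentiableAt.hasDerivAt.comp z hUz.differentiableAt.hasDerivAt).sub_const
        1).mul hFz.deriv.differentiableAt.hasDerivAt
  have E2 : (fun z => 2 * deriv (deriv (deriv F)) z + z * deriv (deriv (deriv (deriv F))) z)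
      =ᶠ[𝓝 0] fun z => (deriv (deriv φ) (U z) * deriv U z ^ 2 + deriv φ (U z) * deriv (deriv U) z)
        * deriv F z + 2 * deriv φ (U z) * deriv U z * deriv (deriv F) z
        + (φ (U z) - 1) * deriv (deriv (deriv F)) z := by
    refine E1.eventuallyEq_of_hasDerivAt ?_ ?_
    · filter_upwards [hFz] with z hz
      exact (hz.deriv.deriv.differentiableAt.hasDerivAt.add ((hasDerivAt_id z).mul
        hz.deriv.deriv.deriv.differentiableAt.hasDerivAt)).congr_deriv (by simp only [id]; ring)
    · filter_upwards [hFz, hUz, hφU] with z hFz hUz hφz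
      have hU' := hUz.differentiableAt.hasDerivAt
      exact ((((hφz.deriv.differentiableAt.hasDerivAt.comp z hU').mul
        hUz.deriv.differentiableAt.hasDerivAt).mul hFz.deriv.differentiableAt.hasDerivAt).add
        (((hφz.differentiableAt.hasDerivAt.comp z hU').sub_const 1).mul
          hFz.deriv.deriv.differentiableAt.hasDerivAt)).congr_deriv
            (by simp only [Pi.mul_apply, Function.comp_apply]; ring)
  have h1 := E1.self_of_nhds
  have h2 := E2.self_of_nhds
  simp only [hU0, hφ0, hF1, zero_mul, add_zero, mul_one, sub_self] at h1 h2
  simp only [tc_one, tc_two, tc_three]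
  exact ⟨by linear_combination h1, by linear_combination h2 / 2 - deriv (deriv F) 0 * h1⟩

lemma tc_of_eventually_leftInverse {f g : ℂ → ℂ} (hf : AnalyticAt ℂ f 0)
    (hg : AnalyticAt ℂ g 0) (hf0 : f 0 = 0) (hf1 : deriv f 0 = 1)
    (hinv : ∀ᶠ z in 𝓝 0, g (f z) = z) :
    deriv g 0 = 1 ∧ tc g 2 = -tc f 2 ∧ tc g 3 = 2 * tc f 2 ^ 2 - tc f 3 := by
  have hfz := hf.eventually_analyticAt
  have hgf : ∀ᶠ z in 𝓝 0, AnalyticAt ℂ g (f z) :=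
    hf.continuousAt.eventually (by rw [hf0]; exact hg.eventually_analyticAt)
  have E1 : (fun z => deriv g (f z) * deriv f z) =ᶠ[𝓝 0] fun _ => 1 := by
    have E0 : (fun z => g (f z)) =ᶠ[𝓝 0] fun z => z := hinv
    refine E0.eventuallyEq_of_hasDerivAt ?_ (.of_forall hasDerivAt_id)
    filter_upwards [hfz, hgf] with z hfz hgz
    exact hgz.differentiableAt.hasDerivAt.comp z hfz.differentiableAt.hasDerivAt
  have E2 : (fun z => deriv (deriv g) (f z) * deriv f z ^ 2 + deriv g (f z) * deriv (deriv f) z)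
      =ᶠ[𝓝 0] fun _ => 0 := by
    refine E1.eventuallyEq_of_hasDerivAt ?_ (.of_forall fun z => hasDerivAt_const z 1)
    filter_upwards [hfz, hgf] with z hfz hgz
    exact ((hgz.deriv.differentiableAt.hasDerivAt.comp z hfz.differentiableAt.hasDerivAt).mul
      hfz.deriv.differentiableAt.hasDerivAt).congr_deriv (by simp only [Function.comp_apply]; ring)
  have E3 : (fun z => deriv (deriv (deriv g)) (f z) * deriv f z ^ 3
      + 3 * deriv (deriv g) (f z) * deriv f z * deriv (deriv f) z
      + deriv g (f z) * deriv (deriv (deriv f)) z) =ᶠ[𝓝 0] fun _ => 0 := by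
    refine E2.eventuallyEq_of_hasDerivAt ?_ (.of_forall fun z => hasDerivAt_const z 0)
    filter_upwards [hfz, hgf] with z hfz hgz
    have hf' := hfz.differentiableAt.hasDerivAt
    exact (((hgz.deriv.deriv.differentiableAt.hasDerivAt.comp z hf').mul
      (hfz.deriv.differentiableAt.hasDerivAt.pow 2)).add
        ((hgz.deriv.differentiableAt.hasDerivAt.comp z hf').mul
          hfz.deriv.deriv.differentiableAt.hasDerivAt)).congr_deriv
            (by simp only [Pi.pow_apply, Function.comp_apply, Nat.cast_ofNat]; ring)
  have h1 := E1.self_of_nhds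
  have h2 := E2.self_of_nhds
  have h3 := E3.self_of_nhds
  simp only [hf0, hf1, mul_one, one_pow] at h1 h2 h3
  rw [h1] at h2 h3
  simp only [tc_two, tc_three]
  exact ⟨h1, by linear_combination h2 / 2,
    by linear_combination h3 / 6 - deriv (deriv f) 0 * h2 / 2⟩

lemma le_mul_sqrt_div_sqrt_of_sq_mul_le {x b e : ℝ} (hb : 0 ≤ b) (he : 0 < e)
    (h : x ^ 2 * e ≤ b ^ 3) : x ≤ b * √b / √e := by
  rw [le_div_iff₀ (Real.sqrt_pos.2 he)]
  calc x * √e ≤ |x| * √e := by gcongr; exact le_abs_self x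
    _ = √(x ^ 2 * e) := by rw [Real.sqrt_mul (sq_nonneg x), Real.sqrt_sq_eq_abs]
    _ ≤ √(b ^ 3) := Real.sqrt_le_sqrt h
    _ = b * √b := by rw [pow_succ, Real.sqrt_mul (sq_nonneg b), Real.sqrt_sq hb]

lemma norm_a₂_le {a₂ a₃ c₁ c₂ d₁ d₂ : ℂ} {B₁ B₂ : ℝ} (hB₁ : 0 < B₁)
    (hne : B₁ ^ 2 + 2 * B₁ - 2 * B₂ ≠ 0)
    (hf₁ : 2 * a₂ = B₁ * c₁) (hf₂ : 6 * a₃ - 4 * a₂ ^ 2 = B₁ * c₂ + B₂ * c₁ ^ 2)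
    (hg₁ : 2 * -a₂ = B₁ * d₁)
    (hg₂ : 6 * (2 * a₂ ^ 2 - a₃) - 4 * (-a₂) ^ 2 = B₁ * d₂ + B₂ * d₁ ^ 2)
    (hc₂ : ‖c₂‖ ≤ 1 - ‖c₁‖ ^ 2) (hd₂ : ‖d₂‖ ≤ 1 - ‖d₁‖ ^ 2) :
    ‖a₂‖ ≤ B₁ * √B₁ / √(2 * |B₁ ^ 2 + 2 * B₁ - 2 * B₂|) := by
  have hd₁ : d₁ = -c₁ :=
    mul_left_cancel₀ (ofReal_ne_zero.2 hB₁.ne') (by linear_combination -hg₁ - hf₁)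
  have key : 4 * a₂ ^ 2 * ((B₁ ^ 2 - 2 * B₂ : ℝ) : ℂ) = ((B₁ ^ 3 : ℝ) : ℂ) * (c₂ + d₂) := by
    rw [hd₁] at hg₂
    push_cast
    linear_combination (B₁ : ℂ) ^ 2 * (hf₂ + hg₂) - 2 * (B₂ : ℂ) * (2 * a₂ + B₁ * c₁) * hf₁
  have hc₁ : B₁ * ‖c₁‖ = 2 * ‖a₂‖ := by
    simpa [abs_of_pos hB₁] using (congrArg norm hf₁).symm
  have hsum : 4 * ‖a₂‖ ^ 2 * |B₁ ^ 2 - 2 * B₂| ≤ B₁ ^ 3 * (2 * (1 - ‖c₁‖ ^ 2)) := by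
    have h := congrArg norm key
    simp only [norm_mul, norm_pow, Complex.norm_real, Complex.norm_ofNat, Real.norm_eq_abs,
      abs_of_pos hB₁] at h
    rw [h]
    gcongr
    calc ‖c₂ + d₂‖ ≤ ‖c₂‖ + ‖d₂‖ := norm_add_le _ _
      _ ≤ 2 * (1 - ‖c₁‖ ^ 2) := by rw [hd₁, norm_neg] at hd₂; linarith
  have htri : |B₁ ^ 2 + 2 * B₁ - 2 * B₂| ≤ |B₁ ^ 2 - 2 * B₂| + 2 * B₁ := by
    have h := abs_add_le (B₁ ^ 2 - 2 * B₂) (2 * B₁)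
    rw [abs_of_pos (by positivity : (0 : ℝ) < 2 * B₁)] at h
    rwa [show B₁ ^ 2 + 2 * B₁ - 2 * B₂ = B₁ ^ 2 - 2 * B₂ + 2 * B₁ by ring]
  have hs : B₁ ^ 3 * ‖c₁‖ ^ 2 = 4 * B₁ * ‖a₂‖ ^ 2 := by
    linear_combination B₁ * (B₁ * ‖c₁‖ + 2 * ‖a₂‖) * hc₁
  refine le_mul_sqrt_div_sqrt_of_sq_mul_le hB₁.le (by positivity) ?_
  nlinarith [mul_le_mul_of_nonneg_left htri (sq_nonneg ‖a₂‖)]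

lemma norm_a₃_le {a₂ a₃ c₁ c₂ d₁ d₂ : ℂ} {B₁ B₂ : ℝ} (hB₁ : 0 < B₁)
    (hf₁ : 2 * a₂ = B₁ * c₁) (hf₂ : 6 * a₃ - 4 * a₂ ^ 2 = B₁ * c₂ + B₂ * c₁ ^ 2)
    (hg₁ : 2 * -a₂ = B₁ * d₁)
    (hg₂ : 6 * (2 * a₂ ^ 2 - a₃) - 4 * (-a₂) ^ 2 = B₁ * d₂ + B₂ * d₁ ^ 2)
    (hc₂ : ‖c₂‖ ≤ 1 - ‖c₁‖ ^ 2) (hd₂ : ‖d₂‖ ≤ 1 - ‖d₁‖ ^ 2) :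
    ‖a₃‖ ≤ 1 / 2 * (B₁ + |B₂ - B₁|) := by
  have hd₁ : d₁ = -c₁ :=
    mul_left_cancel₀ (ofReal_ne_zero.2 hB₁.ne') (by linear_combination -hg₁ - hf₁)
  rw [hd₁, norm_neg] at hd₂
  have key : 6 * a₃ = 2 * B₁ * c₂ + B₁ * d₂ + 3 * B₂ * c₁ ^ 2 := by
    rw [hd₁] at hg₂
    linear_combination 2 * hf₂ + hg₂
  have hnorm : 6 * ‖a₃‖ ≤ 2 * B₁ * ‖c₂‖ + B₁ * ‖d₂‖ + 3 * |B₂| * ‖c₁‖ ^ 2 := by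
    have h := norm_add₃_le (a := 2 * (B₁ : ℂ) * c₂) (b := B₁ * d₂) (c := 3 * B₂ * c₁ ^ 2)
    simp only [norm_mul, norm_pow, Complex.norm_real, Complex.norm_ofNat, Real.norm_eq_abs,
      abs_of_pos hB₁, ← key] at h
    exact h
  have hB : |B₂| - B₁ ≤ |B₂ - B₁| := by
    simpa [abs_of_pos hB₁] using abs_sub_abs_le_abs_sub B₂ B₁
  nlinarith [norm_nonneg c₂, norm_nonneg d₂, abs_nonneg (B₂ - B₁), sq_nonneg ‖c₁‖]

theorem stmt16_general (f g u v φ : ℂ → ℂ) (B₁ B₂ : ℝ)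
    (hf : AnalyticOn ℂ f (ball (0:ℂ) 1))
    (hf0 : f 0 = 0) (hf1 : deriv f 0 = 1)
    (hg : AnalyticOn ℂ g (ball (0:ℂ) 1))
    (hinv : ∀ᶠ z in 𝓝 (0:ℂ), g (f z) = z)
    (hu : AnalyticOn ℂ u (ball (0:ℂ) 1)) (humap : ∀ z ∈ ball (0:ℂ) 1, u z ∈ ball (0:ℂ) 1) (hu0 : u 0 = 0)
    (hv : AnalyticOn ℂ v (ball (0:ℂ) 1)) (hvmap : ∀ w ∈ ball (0:ℂ) 1, v w ∈ ball (0:ℂ) 1) (hv0 : v 0 = 0)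
    (hφ : AnalyticOn ℂ φ (ball (0:ℂ) 1)) (hφ0 : φ 0 = 1)
    (hB₁ : tc φ 1 = (B₁ : ℂ)) (hB₂ : tc φ 2 = (B₂ : ℂ)) (hB₁pos : 0 < B₁)
    (hfu : ∀ z ∈ ball (0:ℂ) 1, 1 + z * iteratedDeriv 2 f z / deriv f z = φ (u z))
    (hgv : ∀ w ∈ ball (0:ℂ) 1, 1 + w * iteratedDeriv 2 g w / deriv g w = φ (v w))
    (hne : B₁ ^ 2 + 2 * B₁ - 2 * B₂ ≠ 0) :
    ‖tc f 2‖ ≤ B₁ * Real.sqrt B₁ / Real.sqrt (2 * |B₁ ^ 2 + 2 * B₁ - 2 * B₂|) ∧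
    ‖tc f 3‖ ≤ (1 / 2) * (B₁ + |B₂ - B₁|) := by
  have hball : ball (0 : ℂ) 1 ∈ 𝓝 0 := ball_mem_nhds 0 one_pos
  obtain ⟨hg1, hg2, hg3⟩ :=
    tc_of_eventually_leftInverse (hf.analyticAt hball) (hg.analyticAt hball) hf0 hf1 hinv
  obtain ⟨hf₁, hf₂⟩ := tc_of_one_add_mul_iteratedDeriv_two_div_deriv_eq_comp
    (hf.analyticAt hball) (hφ.analyticAt hball) (hu.analyticAt hball) hu0 hφ0 hf1
    (eventually_of_mem hball hfu)
  obtain ⟨hg₁, hg₂⟩ := tc_of_one_add_mul_iteratedDeriv_two_div_deriv_eq_comp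
    (hg.analyticAt hball) (hφ.analyticAt hball) (hv.analyticAt hball) hv0 hφ0 hg1
    (eventually_of_mem hball hgv)
  simp only [hB₁, hB₂, hg2, hg3] at hf₁ hf₂ hg₁ hg₂
  have hc₂ := norm_tc_two_le_of_mapsTo_ball hu.differentiableOn humap hu0
  have hd₂ := norm_tc_two_le_of_mapsTo_ball hv.differentiableOn hvmap hv0
  exact ⟨norm_a₂_le hB₁pos hne hf₁ hf₂ hg₁ hg₂ hc₂ hd₂, norm_a₃_le hB₁pos hf₁ hf₂ hg₁ hg₂ hc₂ hd₂⟩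

theorem stmt16 (f g u v φ : ℂ → ℂ) (B₁ B₂ : ℝ)
    (hf : AnalyticOn ℂ f (ball (0:ℂ) 1)) (hfinj : Set.InjOn f (ball (0:ℂ) 1))
    (hf0 : f 0 = 0) (hf1 : deriv f 0 = 1)
    (hg : AnalyticOn ℂ g (ball (0:ℂ) 1)) (hginj : Set.InjOn g (ball (0:ℂ) 1))
    (hinv : ∀ᶠ z in 𝓝 (0:ℂ), g (f z) = z)
    (hu : AnalyticOn ℂ u (ball (0:ℂ) 1)) (humap : ∀ z ∈ ball (0:ℂ) 1, u z ∈ ball (0:ℂ) 1) (hu0 : u 0 = 0)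
    (hv : AnalyticOn ℂ v (ball (0:ℂ) 1)) (hvmap : ∀ w ∈ ball (0:ℂ) 1, v w ∈ ball (0:ℂ) 1) (hv0 : v 0 = 0)
    (hφ : AnalyticOn ℂ φ (ball (0:ℂ) 1)) (hφ0 : φ 0 = 1)
    (hB₁ : tc φ 1 = (B₁ : ℂ)) (hB₂ : tc φ 2 = (B₂ : ℂ)) (hB₁pos : 0 < B₁)
    (hfu : ∀ z ∈ ball (0:ℂ) 1, 1 + z * iteratedDeriv 2 f z / deriv f z = φ (u z))
    (hgv : ∀ w ∈ ball (0:ℂ) 1, 1 + w * iteratedDeriv 2 g w / deriv g w = φ (v w))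
    (hne : B₁ ^ 2 + 2 * B₁ - 2 * B₂ ≠ 0) :
    ‖tc f 2‖ ≤ B₁ * Real.sqrt B₁ / Real.sqrt (2 * |B₁ ^ 2 + 2 * B₁ - 2 * B₂|) ∧
    ‖tc f 3‖ ≤ (1 / 2) * (B₁ + |B₂ - B₁|) :=
  stmt16_general f g u v φ B₁ B₂ hf hf0 hf1 hg hinv hu humap hu0 hv hvmap hv0 hφ hφ0 hB₁ hB₂ hB₁pos
    hfu hgv hne
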